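/- arXiv:1206.5421 — 6 statements merged into one kernel-verified Lean document; each statement's English description precedes it below -/
import Mathlib

section
/- In a tree (connected acyclic graph) with a nonempty set I of marked (infected) nodes, there exist at most two vertices achieving the minimum infection eccentricity, where the infection eccentricity of a vertex v is the maximum distance from v to a vertex in I. -/
/-!
Two distinct minimizers `x, y` of the infection eccentricity must be adjacent. Otherwise let `z`
be the neighbour of `x` on the `x`–`y` path. In a tree a vertex has at most one neighbour closer
to a given `u`, so `d(·, u)` has no local maximum in the interior of a path, and hence
`d(z, u) < max (d(x, u)) (d(y, u))` for every `u ∈ I`: the eccentricity of `z` is smaller than the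
minimum. So the minimizers form a clique, and a tree, being bipartite, has no clique of size 3.
-/

open Finset SimpleGraph

theorem Nat.lt_max_of_forall_lt_max_neighbours {α : Type*} [LinearOrder α] {f : ℕ → α} {k : ℕ}
    (h : ∀ i, 0 < i → i < k → f i < max (f (i - 1)) (f (i + 1)))
    {i : ℕ} (hi₀ : 0 < i) (hik : i < k) : f i < max (f 0) (f k) := by
  obtain ⟨j, hj, hmax⟩ := (range (k + 1)).exists_max_image f ⟨0, by simp⟩
  have hj : j ≤ k := Nat.lt_succ_iff.mp (mem_range.mp hj)
  have hbound : ∀ l ≤ k, f l ≤ f j := fun l hl => hmax l (mem_range.mpr (Nat.lt_succ_of_le hl))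
  have hfj : f j ≤ max (f 0) (f k) := by
    rcases Nat.eq_zero_or_pos j with rfl | hj₀
    · exact le_max_left _ _
    rcases hj.lt_or_eq with hjk | rfl
    · exact absurd (h j hj₀ hjk) (max_le (hbound _ (by omega)) (hbound _ hjk)).not_gt
    · exact le_max_right _ _
  exact (h i hi₀ hik).trans_le ((max_le (hbound _ (by omega)) (hbound _ hik)).trans hfj)

namespace SimpleGraph

variable {V : Type*} {G : SimpleGraph V}

theorem IsTree.dist_lt_max_of_adj (hG : G.IsTree) {z a b : V} (ha : G.Adj z a) (hb : G.Adj z b)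
    (hab : a ≠ b) (u : V) : G.dist z u < max (G.dist a u) (G.dist b u) := by
  by_contra! hle
  have hcloser : ∀ {c}, G.Adj z c → G.dist c u ≤ G.dist z u → G.dist z u = G.dist c u + 1 := by
    intro c hc hcu
    have := hG.dist_eq_dist_add_one_of_adj u hc
    rw [dist_comm, dist_comm (u := u)] at this
    omega
  obtain ⟨pa, -, hpa⟩ := hG.connected.exists_path_of_dist a u
  obtain ⟨pb, -, hpb⟩ := hG.connected.exists_path_of_dist b u
  have hza : (Walk.cons ha pa).IsPath := Walk.isPath_of_length_eq_dist _ <| by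
    rw [Walk.length_cons, hpa, hcloser ha (le_of_max_le_left hle)]
  have hzb : (Walk.cons hb pb).IsPath := Walk.isPath_of_length_eq_dist _ <| by
    rw [Walk.length_cons, hpb, hcloser hb (le_of_max_le_right hle)]
  have hpath := (hG.isAcyclic.subsingleton_path z u).elim ⟨_, hza⟩ ⟨_, hzb⟩
  have hsnd := congr_arg (fun p : G.Path z u => p.val.snd) hpath
  simp only [Walk.snd_cons] at hsnd
  exact hab hsnd

theorem IsTree.dist_getVert_lt_max (hG : G.IsTree) {x y : V} {p : G.Walk x y} (hp : p.IsPath)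
    (u : V) {i : ℕ} (hi₀ : 0 < i) (hi : i < p.length) :
    G.dist (p.getVert i) u < max (G.dist x u) (G.dist y u) := by
  have hinterior : ∀ j, 0 < j → j < p.length →
      G.dist (p.getVert j) u < max (G.dist (p.getVert (j - 1)) u) (G.dist (p.getVert (j + 1)) u) := by
    intro j hj₀ hj
    have hprev : G.Adj (p.getVert j) (p.getVert (j - 1)) := by
      simpa [Nat.sub_add_cancel hj₀] using (p.adj_getVert_succ (i := j - 1) (by omega)).symm
    have hne : p.getVert (j - 1) ≠ p.getVert (j + 1) := fun h =>
      absurd (hp.getVert_injOn (by simp only [Set.mem_ofPred_eq]; omega)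
        (by simp only [Set.mem_ofPred_eq]; omega) h) (by omega)
    exact hG.dist_lt_max_of_adj hprev (p.adj_getVert_succ hj) hne u
  simpa only [Walk.getVert_zero, Walk.getVert_length] using
    Nat.lt_max_of_forall_lt_max_neighbours (f := fun j => G.dist (p.getVert j) u) hinterior hi₀ hi

theorem IsTree.sup'_dist_getVert_lt_max (hG : G.IsTree) {x y : V} {p : G.Walk x y}
    (hp : p.IsPath) {I : Finset V} (hI : I.Nonempty) {i : ℕ} (hi₀ : 0 < i) (hi : i < p.length) :
    I.sup' hI (fun u => G.dist (p.getVert i) u) <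
      max (I.sup' hI fun u => G.dist x u) (I.sup' hI fun u => G.dist y u) := by
  rw [sup'_lt_iff]
  intro u hu
  exact (hG.dist_getVert_lt_max hp u hi₀ hi).trans_le
    (max_le_max (le_sup' (fun u => G.dist x u) hu) (le_sup' (fun u => G.dist y u) hu))

end SimpleGraph

theorem stmt_0_general {V : Type*} [Fintype V] [Nonempty V]
    (G : SimpleGraph V) (hG : G.IsTree)
    (I : Finset V) (hI : I.Nonempty)
    (e : V → ℕ) (he : ∀ v, e v = I.sup' hI (fun u => G.dist v u)) :
    (Finset.univ.filter
      (fun v => e v = Finset.univ.inf' Finset.univ_nonempty e)).card ≤ 2 := by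
  set m := univ.inf' univ_nonempty e
  refine IsClique.card_le_of_colorable ?_ hG.colorable_two
  intro x hx y hy hxy
  simp only [coe_filter, mem_univ, true_and, Set.mem_ofPred_eq] at hx hy
  by_contra hnadj
  obtain ⟨p, hp, -⟩ := hG.connected.exists_path_of_dist x y
  have hlen : 1 < p.length := by
    by_contra! hle
    interval_cases h : p.length
    · exact hxy (Walk.eq_of_length_eq_zero h)
    · exact hnadj (Walk.adj_of_length_eq_one h)
  have hlt := hG.sup'_dist_getVert_lt_max hp hI one_pos hlen
  rw [← he, ← he, ← he, hx, hy, max_self] at hlt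
  exact hlt.not_ge (inf'_le e (mem_univ _))

/-- In a finite tree with a nonempty set `I` of infected nodes, at most two vertices
achieve the minimum infection eccentricity `ẽ(v) = max_{u ∈ I} d(v,u)`. -/
theorem stmt_0 {V : Type*} [Fintype V] [DecidableEq V] [Nonempty V]
    (G : SimpleGraph V) (hG : G.IsTree)
    (I : Finset V) (hI : I.Nonempty)
    (e : V → ℕ) (he : ∀ v, e v = I.sup' hI (fun u => G.dist v u)) :
    (Finset.univ.filter
      (fun v => e v = Finset.univ.inf' Finset.univ_nonempty e)).card ≤ 2 :=
  stmt_0_general G hG I hI e he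
end

section
/- In a tree with a nonempty set I of marked nodes, if two distinct vertices both achieve the minimum infection eccentricity, then they are adjacent. -/
/-!
If `u` and `w` are not adjacent, the neighbour `x` of `u` on the path from `u` to `w` is an
interior vertex of that path. In a tree every vertex `t` is strictly closer to such a vertex than
to the farther of `u` and `w`, so the eccentricity of `x` is smaller than that of `u`.
-/

namespace SimpleGraph

variable {V : Type*} {G : SimpleGraph V} {a b x : V}

theorem Walk.dist_add_dist_of_mem_support {p : G.Walk a b} (hp : p.length = G.dist a b)
    (hx : x ∈ p.support) : G.dist a x + G.dist x b = G.dist a b := by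
  classical
  have hlen : (p.takeUntil x hx).length + (p.dropUntil x hx).length = p.length := by
    rw [← Walk.length_append, p.take_spec hx]
  have hax : G.dist a x ≤ (p.takeUntil x hx).length := dist_le _
  have hxb : G.dist x b ≤ (p.dropUntil x hx).length := dist_le _
  have htri : G.dist a b ≤ G.dist a x + G.dist x b :=
    (p.takeUntil x hx).reachable.dist_triangle_left b
  omega

theorem IsAcyclic.support_subset_of_isPath (hG : G.IsAcyclic) {p q : G.Walk a b}
    (hp : p.IsPath) : p.support ⊆ q.support := by
  classical
  have hpq : p = q.bypass :=
    congrArg Subtype.val ((hG.subsingleton_path a b).elim ⟨p, hp⟩ ⟨q.bypass, q.bypass_isPath⟩)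
  exact hpq ▸ q.support_bypass_subset_support

/-- `x` lies on a geodesic from `t` to `a` or on one from `t` to `b`, because their concatenation
covers the unique path from `a` to `b`. -/
theorem IsTree.dist_lt_max_of_mem_support (hG : G.IsTree) {p : G.Walk a b} (hp : p.IsPath)
    (hx : x ∈ p.support) (hxa : x ≠ a) (hxb : x ≠ b) (t : V) :
    G.dist t x < max (G.dist t a) (G.dist t b) := by
  obtain ⟨qa, hqa⟩ := hG.connected.exists_walk_length_eq_dist t a
  obtain ⟨qb, hqb⟩ := hG.connected.exists_walk_length_eq_dist t b
  have hxq : x ∈ (qa.reverse.append qb).support := hG.isAcyclic.support_subset_of_isPath hp hx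
  rw [Walk.mem_support_append_iff, Walk.support_reverse, List.mem_reverse] at hxq
  rcases hxq with hxqa | hxqb
  · have hsplit := Walk.dist_add_dist_of_mem_support hqa hxqa
    have hpos := hG.connected.pos_dist_of_ne hxa
    omega
  · have hsplit := Walk.dist_add_dist_of_mem_support hqb hxqb
    have hpos := hG.connected.pos_dist_of_ne hxb
    omega

end SimpleGraph

theorem stmt_1_general {V : Type*} [Fintype V] [Nonempty V]
    (G : SimpleGraph V) (hG : G.IsTree)
    (I : Finset V) (hI : I.Nonempty)
    (e : V → ℕ) (he : ∀ v, e v = I.sup' hI (fun u => G.dist v u))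
    (u w : V) (huw : u ≠ w)
    (hu : e u = Finset.univ.inf' Finset.univ_nonempty e)
    (hw : e w = Finset.univ.inf' Finset.univ_nonempty e) :
    G.Adj u w := by
  by_contra hnadj
  set m := Finset.univ.inf' Finset.univ_nonempty e
  have hecc_le (v : V) (hv : e v = m) (t : V) (ht : t ∈ I) : G.dist t v ≤ m := by
    rw [SimpleGraph.dist_comm, ← hv, he v]
    exact Finset.le_sup' _ ht
  obtain ⟨p, hp, -⟩ := hG.connected.exists_path_of_dist u w
  have hux : G.Adj u p.snd := p.adj_snd (SimpleGraph.Walk.not_nil_of_ne huw)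
  have hxw : p.snd ≠ w := fun h => hnadj (h ▸ hux)
  have hlt : e p.snd < m := by
    rw [he p.snd, Finset.sup'_lt_iff]
    intro t ht
    rw [SimpleGraph.dist_comm]
    have hcloser := hG.dist_lt_max_of_mem_support hp (p.getVert_mem_support 1) hux.ne.symm hxw t
    exact hcloser.trans_le (max_le (hecc_le u hu t ht) (hecc_le w hw t ht))
  exact hlt.not_ge (Finset.inf'_le _ (Finset.mem_univ _))

/-- In a finite tree with a nonempty set `I` of infected nodes, two distinct vertices
both achieving the minimum infection eccentricity must be adjacent. -/
theorem stmt_1 {V : Type*} [Fintype V] [DecidableEq V] [Nonempty V]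
    (G : SimpleGraph V) (hG : G.IsTree)
    (I : Finset V) (hI : I.Nonempty)
    (e : V → ℕ) (he : ∀ v, e v = I.sup' hI (fun u => G.dist v u))
    (u w : V) (huw : u ≠ w)
    (hu : e u = Finset.univ.inf' Finset.univ_nonempty e)
    (hw : e w = Finset.univ.inf' Finset.univ_nonempty e) :
    G.Adj u w :=
  stmt_1_general G hG I hI e he u w huw hu hw
end

section
/- In a tree with a nonempty set I of marked nodes, if u and w are two adjacent vertices both achieving the minimum infection eccentricity λ, and a is any other vertex with d(a,u) = β (where u is the closer of the two centers to a), then the infection eccentricity of a equals λ + β. -/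
/-!
The upper bound is the triangle inequality through `u`. For the lower bound, take an infected
vertex `x` at distance `λ` from `u`. Since `d(w, x) ≤ λ` and `d(w, x) ≠ d(u, x)` in a tree, `x`
lies on the `w`-side of the bridge `uw` while `a` lies on the `u`-side, so every geodesic from `a`
to `x` crosses `uw` and passes through `u`; hence `d(a, x) = β + λ`.
-/

namespace SimpleGraph

variable {V : Type*} {G : SimpleGraph V}

lemma Walk.dist_eq_dist_add_dist_of_mem_support {a x v : V} {p : G.Walk a x}
    (hp : p.length = G.dist a x) (hv : v ∈ p.support) :
    G.dist a x = G.dist a v + G.dist v x := by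
  classical
  rw [← length_eq_dist_of_subwalk hp (p.isSubwalk_takeUntil hv),
    ← length_eq_dist_of_subwalk hp (p.isSubwalk_dropUntil hv), ← length_append, p.take_spec hv,
    hp]

lemma Connected.reachable_deleteEdges_of_dist_lt (hc : G.Connected) {u w x : V}
    (h : G.dist x u < G.dist x w) : (G.deleteEdges {s(u, w)}).Reachable x u := by
  obtain ⟨p, hp⟩ := hc.exists_walk_length_eq_dist x u
  refine reachable_deleteEdges_iff_exists_walk.mpr ⟨p, fun hedge => ?_⟩
  have := Walk.dist_eq_dist_add_dist_of_mem_support hp (p.snd_mem_support_of_mem_edges hedge)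
  omega

lemma Connected.dist_eq_dist_add_dist_of_isBridge (hc : G.Connected) {u w a x : V}
    (hb : G.IsBridge s(u, w)) (ha : G.dist a u < G.dist a w) (hx : G.dist x w < G.dist x u) :
    G.dist a x = G.dist a u + G.dist u x := by
  obtain ⟨p, hp⟩ := hc.exists_walk_length_eq_dist a x
  have hax : ¬ (G.deleteEdges {s(u, w)}).Reachable a x := fun hax =>
    isBridge_iff.mp hb <| ((hc.reachable_deleteEdges_of_dist_lt ha).symm.trans hax).trans <| by
      simpa only [Sym2.eq_swap] using hc.reachable_deleteEdges_of_dist_lt (u := w) (w := u) hx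
  exact Walk.dist_eq_dist_add_dist_of_mem_support hp
    (p.fst_mem_support_of_mem_edges (p.mem_edges_of_not_reachable_deleteEdges hax))

end SimpleGraph

open SimpleGraph

-- `hside` encodes that `a` lies in the component of `G - w` containing `u`.
theorem stmt_2_general {V : Type*}
    (G : SimpleGraph V) (hG : G.IsTree)
    (I : Finset V) (hI : I.Nonempty)
    (e : V → ℕ) (he : ∀ v, e v = I.sup' hI (fun x => G.dist v x))
    (u w : V) (hadj : G.Adj u w) (lam : ℕ)
    (hu : e u = lam) (hw : e w = lam)
    (a : V)
    (β : ℕ) (hdist : G.dist a u = β)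
    (hside : G.dist a w = G.dist a u + 1) :
    e a = lam + β := by
  have hc := hG.connected
  have hle : ∀ v, ∀ x ∈ I, G.dist v x ≤ e v := fun v x hx => (he v).symm ▸ Finset.le_sup' _ hx
  obtain ⟨x, hxI, hx⟩ := Finset.exists_mem_eq_sup' hI (fun x => G.dist u x)
  rw [← he u, hu] at hx
  have hxw : G.dist x w < G.dist x u := by
    have hwx : G.dist x w ≤ G.dist x u := by
      rw [dist_comm, dist_comm (u := x), ← hx, ← hw]
      exact hle w x hxI
    exact hwx.lt_of_ne (hG.dist_ne_of_adj x hadj).symm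
  refine le_antisymm ?_ ?_
  · rw [he a]
    refine Finset.sup'_le _ _ fun y hy => (hc.dist_triangle (v := u)).trans ?_
    have := hle u y hy
    omega
  · calc lam + β = G.dist a x := by
          rw [hc.dist_eq_dist_add_dist_of_isBridge
            (isAcyclic_iff_forall_adj_isBridge.mp hG.isAcyclic hadj) (by omega) hxw, hx, hdist,
            add_comm]
      _ ≤ e a := hle a x hxI

/-- In a finite tree with nonempty infected set `I`, if adjacent vertices `u, w` both
achieve the minimum infection eccentricity `λ`, and `a ∉ {u,w}` lies in the component of
`G − w` containing `u` (encoded by `d(a,w) = d(a,u) + 1`) with `d(a,u) = β`, then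
`ẽ(a) = λ + β`. -/
theorem stmt_2 {V : Type*} [Fintype V] [DecidableEq V] [Nonempty V]
    (G : SimpleGraph V) (hG : G.IsTree)
    (I : Finset V) (hI : I.Nonempty)
    (e : V → ℕ) (he : ∀ v, e v = I.sup' hI (fun x => G.dist v x))
    (u w : V) (hadj : G.Adj u w) (lam : ℕ)
    (hu : e u = lam) (hw : e w = lam)
    (hmin : lam = Finset.univ.inf' Finset.univ_nonempty e)
    (a : V) (hau : a ≠ u) (haw : a ≠ w)
    (β : ℕ) (hdist : G.dist a u = β)
    (hside : G.dist a w = G.dist a u + 1) :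
    e a = lam + β :=
  stmt_2_general G hG I hI e he u w hadj lam hu hw a β hdist hside
end

section
/- In a tree with a nonempty set I of marked nodes, for any vertex a that is not a Jordan infection center, a has a neighbor whose infection eccentricity is strictly smaller than that of a; consequently, along the path from a toward a Jordan infection center the infection eccentricity strictly decreases at every step. -/
/-!
Let `b` be the neighbour of `a` towards `v₀`. Since the edge `ab` of a tree is a bridge, every
vertex `y` lies on `a`'s side or on `b`'s side of it. On `b`'s side, `y` is closer to `b` than to
`a`, so `d(b, y) < d(a, y) ≤ ẽ(a)`; on `a`'s side, the geodesic from `v₀` (which lies on `b`'s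
side) to `y` passes through `b`, so `d(b, y) ≤ d(v₀, y) ≤ ẽ(v₀) < ẽ(a)`.
-/

namespace SimpleGraph

variable {V : Type*} {G : SimpleGraph V}

lemma Walk.dist_add_dist_le_length_of_mem_support {u v x : V} (p : G.Walk u v)
    (hx : x ∈ p.support) : G.dist u x + G.dist x v ≤ p.length := by
  classical
  calc G.dist u x + G.dist x v
      ≤ (p.takeUntil x hx).length + (p.dropUntil x hx).length :=
        add_le_add (dist_le _) (dist_le _)
    _ = p.length := by rw [← Walk.length_append, p.take_spec hx]

lemma Reachable.dist_add_dist_le_of_not_reachable_deleteEdges {u v a b : V}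
    (huv : G.Reachable u v) (h : ¬ (G.deleteEdges {s(a, b)}).Reachable u v) :
    G.dist u b + G.dist b v ≤ G.dist u v := by
  obtain ⟨p, hp⟩ := huv.exists_walk_length_eq_dist
  have hb : b ∈ p.support :=
    p.snd_mem_support_of_mem_edges (p.mem_edges_of_not_reachable_deleteEdges h)
  exact hp ▸ p.dist_add_dist_le_length_of_mem_support hb

lemma Reachable.exists_adj_dist_eq_dist_add_one {a v : V} (hav : G.Reachable a v) (hne : a ≠ v) :
    ∃ b, G.Adj a b ∧ G.dist a v = G.dist b v + 1 := by
  obtain ⟨p, hp⟩ := hav.exists_walk_length_eq_dist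
  cases p with
  | nil => exact absurd rfl hne
  | @cons _ b _ hab q =>
    have hq : G.dist b v ≤ q.length := dist_le q
    have htri : G.dist a v ≤ G.dist a b + G.dist b v := hab.reachable.dist_triangle_left v
    rw [dist_eq_one_iff_adj.mpr hab] at htri
    exact ⟨b, hab, by simp only [Walk.length_cons] at hp; omega⟩

lemma IsTree.dist_lt_or_dist_le_of_adj {a b v : V} (hG : G.IsTree) (hab : G.Adj a b)
    (hv : G.dist a v = G.dist b v + 1) (y : V) :
    G.dist b y < G.dist a y ∨ G.dist b y ≤ G.dist v y := by
  have hconn := hG.connected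
  have hdab : G.dist a b = 1 := dist_eq_one_iff_adj.mpr hab
  have hbridge : ¬ (G.deleteEdges {s(a, b)}).Reachable a b :=
    isAcyclic_iff_forall_adj_isBridge.mp hG.isAcyclic hab
  have hvb : (G.deleteEdges {s(a, b)}).Reachable v b := by
    by_contra h
    rw [Sym2.eq_swap] at h
    have := (hconn v b).dist_add_dist_le_of_not_reachable_deleteEdges h
    rw [dist_comm (u := v), hv, hdab, dist_comm (u := v)] at this
    omega
  by_cases hby : (G.deleteEdges {s(a, b)}).Reachable b y
  · have hay : ¬ (G.deleteEdges {s(a, b)}).Reachable a y := fun h => hbridge (h.trans hby.symm)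
    have := (hconn a y).dist_add_dist_le_of_not_reachable_deleteEdges hay
    omega
  · have hvy : ¬ (G.deleteEdges {s(a, b)}).Reachable v y := fun h => hby (hvb.symm.trans h)
    have := (hconn v y).dist_add_dist_le_of_not_reachable_deleteEdges hvy
    omega

end SimpleGraph

theorem stmt_3_general {V : Type*}
    (G : SimpleGraph V) (hG : G.IsTree)
    (I : Finset V) (hI : I.Nonempty)
    (e : V → ℕ) (he : ∀ v, e v = I.sup' hI (fun x => G.dist v x))
    (v₀ : V)
    (a : V) (ha : e v₀ < e a) :
    ∃ b, G.Adj a b ∧ G.dist a v₀ = G.dist b v₀ + 1 ∧ e b < e a := by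
  have hne : a ≠ v₀ := by rintro rfl; exact lt_irrefl _ ha
  obtain ⟨b, hab, hb⟩ := (hG.connected a v₀).exists_adj_dist_eq_dist_add_one hne
  refine ⟨b, hab, hb, ?_⟩
  rw [he b, Finset.sup'_lt_iff]
  intro y hy
  have hay : G.dist a y ≤ e a := he a ▸ Finset.le_sup' (fun x => G.dist a x) hy
  have hv₀y : G.dist v₀ y ≤ e v₀ := he v₀ ▸ Finset.le_sup' (fun x => G.dist v₀ x) hy
  rcases hG.dist_lt_or_dist_le_of_adj hab hb y with h | h <;> omega

/-- In a finite tree with nonempty infected set `I`, if `v₀` minimizes the infection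
eccentricity and `ẽ(a) > ẽ(v₀)`, then `a` has a neighbor `b` on the path from `a`
toward `v₀` (i.e. with `d(a,v₀) = d(b,v₀) + 1`) whose infection eccentricity is
strictly smaller. -/
theorem stmt_3 {V : Type*} [Fintype V] [DecidableEq V] [Nonempty V]
    (G : SimpleGraph V) (hG : G.IsTree)
    (I : Finset V) (hI : I.Nonempty)
    (e : V → ℕ) (he : ∀ v, e v = I.sup' hI (fun x => G.dist v x))
    (v₀ : V) (hv₀ : ∀ v, e v₀ ≤ e v)
    (a : V) (ha : e v₀ < e a) :
    ∃ b, G.Adj a b ∧ G.dist a v₀ = G.dist b v₀ + 1 ∧ e b < e a :=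
  stmt_3_general G hG I hI e he v₀ a ha
end

section
/- In a tree, if u and v are adjacent with ẽ(u) > ẽ(v), then some marked node in the component of G − u containing v is at distance exactly ẽ(v) from v (i.e., the farthest marked node from u lies on v's side). -/
lemma SimpleGraph.Adj.dist_le_dist_add_one {V : Type*} {G : SimpleGraph V} {u v : V}
    (h : G.Adj u v) (a : V) : G.dist u a ≤ G.dist v a + 1 := by
  have := h.reachable.dist_triangle_left a
  rwa [SimpleGraph.dist_eq_one_iff_adj.mpr h, add_comm] at this

theorem stmt_6_general {V : Type*}
    (G : SimpleGraph V)
    (I : Finset V) (hI : I.Nonempty)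
    (e : V → ℕ) (he : ∀ x, e x = I.sup' hI (fun y => G.dist x y))
    (u v : V) (hadj : G.Adj u v) (hlt : e v < e u) :
    ∃ a ∈ I, G.dist u a = G.dist v a + 1 ∧ G.dist v a = e v ∧
      G.dist u a = e u ∧ e u = e v + 1 := by
  obtain ⟨a, ha, hua⟩ := Finset.exists_mem_eq_sup' hI (G.dist u ·)
  rw [← he] at hua
  have hva : G.dist v a ≤ e v := he v ▸ Finset.le_sup' _ ha
  have := hadj.dist_le_dist_add_one a
  exact ⟨a, ha, by omega, by omega, hua.symm, by omega⟩

/-- In a finite tree with nonempty infected set `I`, if `u` and `v` are adjacent and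
`ẽ(u) > ẽ(v)`, then some infected node `a` in the component of `G − u` containing `v`
(encoded by `d(u,a) = d(v,a) + 1`) satisfies `d(v,a) = ẽ(v)` and `d(u,a) = ẽ(u) = ẽ(v)+1`. -/
theorem stmt_6 {V : Type*} [Fintype V] [DecidableEq V]
    (G : SimpleGraph V) (hG : G.IsTree)
    (I : Finset V) (hI : I.Nonempty)
    (e : V → ℕ) (he : ∀ x, e x = I.sup' hI (fun y => G.dist x y))
    (u v : V) (hadj : G.Adj u v) (hlt : e v < e u) :
    ∃ a ∈ I, G.dist u a = G.dist v a + 1 ∧ G.dist v a = e v ∧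
      G.dist u a = e u ∧ e u = e v + 1 :=
  stmt_6_general G I hI e he u v hadj hlt
end

section
/- In a tree with nonempty marked set I, it is impossible to have two nonadjacent vertices both achieving the minimum infection eccentricity. -/
private lemma dist_split {V : Type*} [DecidableEq V] {G : SimpleGraph V} (hconn : G.Connected)
    {a b z : V} (p : G.Walk a b) (hp : p.length = G.dist a b) (hz : z ∈ p.support) :
    G.dist a z + G.dist z b = G.dist a b := by
  have h1 := G.dist_le (p.takeUntil z hz)
  have h2 := G.dist_le (p.dropUntil z hz)
  have h3 : (p.takeUntil z hz).length + (p.dropUntil z hz).length = p.length := by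
    rw [← SimpleGraph.Walk.length_append, p.take_spec hz]
  have h4 := hconn.dist_triangle (u := a) (v := z) (w := b)
  omega

/-- In a finite tree with nonempty infected set `I`, there do not exist two vertices at
distance at least 2 from each other that both achieve the minimum infection
eccentricity. -/
theorem stmt_18 {V : Type*} [Fintype V] [DecidableEq V] [Nonempty V]
    (G : SimpleGraph V) (hG : G.IsTree)
    (I : Finset V) (hI : I.Nonempty)
    (e : V → ℕ) (he : ∀ x, e x = I.sup' hI (fun y => G.dist x y))
    (lam : ℕ) (hlam : lam = Finset.univ.inf' Finset.univ_nonempty e) :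
    ¬ ∃ u v : V, e u = lam ∧ e v = lam ∧ 2 ≤ G.dist u v := by
  rintro ⟨u, v, hu, hv, huv⟩
  have hconn := hG.isConnected
  obtain ⟨p, hp, hplen⟩ := hconn.exists_path_of_dist u v
  cases p with
  | nil =>
      rw [SimpleGraph.dist_self] at huv; omega
  | @cons _ w _ huw q =>
      have hq : q.IsPath := hp.of_cons
      have hunotq : u ∉ q.support := ((SimpleGraph.Walk.cons_isPath_iff huw q).mp hp).2
      have hlen : q.length + 1 = G.dist u v := by
        simpa [Nat.add_comm] using hplen
      have hduw : G.dist u w = 1 := SimpleGraph.dist_eq_one_iff_adj.mpr huw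
      have hqd : q.length = G.dist w v := by
        have h1 := G.dist_le q
        have h2 := hconn.dist_triangle (u := u) (v := w) (w := v)
        omega
      have hwv : G.dist w v + 1 = G.dist u v := by omega
      -- show e w < lam
      have hewlt : e w < lam := by
        rw [he w]
        rw [Finset.sup'_lt_iff]
        intro y hy
        have hyu : G.dist u y ≤ lam := by
          have := Finset.le_sup' (fun y => G.dist u y) hy
          rw [← he u, hu] at this; exact this
        have hyv : G.dist v y ≤ lam := by
          have := Finset.le_sup' (fun y => G.dist v y) hy
          rw [← he v, hv] at this; exact this
        by_cases hcase : G.dist w y < G.dist u y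
        · omega
        · -- d u y ≤ d w y
          push_neg at hcase
          obtain ⟨r, hr, hrlen⟩ := hconn.exists_path_of_dist y u
          set t : G.Walk y v := r.append (SimpleGraph.Walk.cons huw q) with ht
          have hdisj : ∀ z ∈ r.support, z ∉ q.support := by
            intro z hzr hzq
            have hA : G.dist y z + G.dist z u = G.dist y u := dist_split hconn r hrlen hzr
            have hB : G.dist w z + G.dist z v = G.dist w v := dist_split hconn q hqd hzq
            have hC := hconn.dist_triangle (u := u) (v := z) (w := v)
            have hD := hconn.dist_triangle (u := u) (v := w) (w := z)
            have hG' := hconn.dist_triangle (u := w) (v := z) (w := y)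
            have c1 : G.dist y z = G.dist z y := SimpleGraph.dist_comm
            have c2 : G.dist z u = G.dist u z := SimpleGraph.dist_comm
            have c3 : G.dist u y = G.dist y u := SimpleGraph.dist_comm
            have c4 : G.dist w y ≤ G.dist w z + G.dist z y := hG'
            omega
          have htp : t.IsPath := by
            rw [SimpleGraph.Walk.isPath_def, ht, SimpleGraph.Walk.support_append,
              SimpleGraph.Walk.support_cons, List.tail_cons, List.nodup_append]
            exact ⟨hr.support_nodup, hq.support_nodup,
              fun a ha b hb hab => hdisj a ha (by rw [hab]; exact hb)⟩
          obtain ⟨g, hg, hglen⟩ := hconn.exists_path_of_dist y v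
          have heq : (⟨t, htp⟩ : G.Path y v) = ⟨g, hg⟩ :=
            (SimpleGraph.isAcyclic_iff_path_unique.mp hG.IsAcyclic) _ _
          have hlent : t.length = G.dist y v := by
            have := congrArg (fun (P : G.Path y v) => P.val.length) heq
            simpa [hglen] using this
          have htl : t.length = G.dist y u + (1 + q.length) := by
            rw [ht, SimpleGraph.Walk.length_append, SimpleGraph.Walk.length_cons, hrlen]; omega
          have hwyle : G.dist w y ≤ 1 + G.dist u y := by
            have := hconn.dist_triangle (u := w) (v := u) (w := y)
            have : G.dist w u = 1 := by rw [SimpleGraph.dist_comm]; exact hduw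
            have h := hconn.dist_triangle (u := w) (v := u) (w := y)
            omega
          have c3 : G.dist u y = G.dist y u := SimpleGraph.dist_comm
          have c5 : G.dist y v = G.dist v y := SimpleGraph.dist_comm
          omega
      have hle : lam ≤ e w := by
        rw [hlam]
        exact Finset.inf'_le e (Finset.mem_univ w)
      omega
end
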